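/- Let λ > 0, ε ∈ [0,1], β ≥ 0, Δ_IN > 0, Δ_OUT > 0 be fixed real numbers, with Γ = 1 + ε(β-1), Δ_eff = (1-ε)Δ_IN + εΔ_OUT, Λ = 1 + Δ_eff + ε(β²-1). For α > 0 let m(α) = 2αΓ/(α + λ + t(α) + 1) and q(α) = 4α[αΓ²(p+t(α)-3) + Λ(p+t(α)+1)] / [(p+t(α)+1)(p² - 2c + t(α)² + 2t(α)(p+1) + 1)], where p = α + λ, c = α - λ, t(α) = √((p-1)² + 4λ). Then the estimation error E_estim(α) = 1 + q(α) - 2m(α) tends to (β-1)²ε² as α → ∞. In particular, for ε ∈ (0,1) and β ≠ 1, ridge regression with any fixed positive regularisation is not consistent for the estimation error. -/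

import Mathlib

/-!
Since t(α)² = (α + λ - 1)² + 4λ, the second factor in the denominator of q(α) equals
2 t(α) (α + λ + t(α) + 1). After this simplification E_estim(α) is a rational function of
u = t(α)/α and v = 1/α that is continuous at (u, v) = (1, 0), the limit of (u, v) as α → ∞,
and its value there is 1 + Γ² - 2Γ = (Γ - 1)² = ε²(β - 1)².
-/

open Filter Topology

theorem tendsto_sqrt_sq_add_div_atTop (a b : ℝ) :
    Tendsto (fun x => √((x + a) ^ 2 + b) / x) atTop (𝓝 1) := by
  have hinner : Tendsto (fun x : ℝ => (1 + a * x⁻¹) ^ 2 + b * (x⁻¹) ^ 2) atTop (𝓝 1) := by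
    have h := ((tendsto_inv_atTop_zero.const_mul a).const_add 1).pow 2 |>.add
      ((tendsto_inv_atTop_zero.pow 2).const_mul b)
    simpa using h
  have h := (Real.continuous_sqrt.tendsto _).comp hinner
  rw [Real.sqrt_one] at h
  refine h.congr' ?_
  filter_upwards [eventually_gt_atTop 0] with x hx
  have hx2 : (1 + a * x⁻¹) ^ 2 + b * (x⁻¹) ^ 2 = ((x + a) ^ 2 + b) / x ^ 2 := by
    field_simp
  rw [Function.comp_apply, hx2, Real.sqrt_div' _ (sq_nonneg x), Real.sqrt_sq hx.le]

/-- E_estim(α) at `p = (t(α)/α, 1/α)`; `σ` stands for `(α + λ + t(α) + 1)/α`. -/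
noncomputable def ridgeErrorProfile (lam Γ Λ : ℝ) (p : ℝ × ℝ) : ℝ :=
  let σ := 1 + p.1 + (lam + 1) * p.2
  1 + 2 * Γ ^ 2 * (σ - 4 * p.2) / (p.1 * σ ^ 2) + 2 * Λ * p.2 / (p.1 * σ) - 4 * Γ / σ

theorem continuousAt_ridgeErrorProfile (lam Γ Λ : ℝ) :
    ContinuousAt (ridgeErrorProfile lam Γ Λ) (1, 0) := by
  unfold ridgeErrorProfile
  fun_prop (disch := norm_num)

theorem ridgeErrorProfile_one_zero (lam Γ Λ : ℝ) :
    ridgeErrorProfile lam Γ Λ (1, 0) = (Γ - 1) ^ 2 := by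
  norm_num [ridgeErrorProfile]; ring

theorem ridge_q_denominator_eq {α lam t : ℝ} (ht : t ^ 2 = (α + lam - 1) ^ 2 + 4 * lam) :
    (α + lam) ^ 2 - 2 * (α - lam) + t ^ 2 + 2 * t * (α + lam + 1) + 1
      = 2 * t * (α + lam + t + 1) := by
  linear_combination -ht

theorem ridge_error_eq_profile {α lam t Γ Λ : ℝ} (hα : 0 < α) (hlam : 0 < lam) (ht : 0 < t)
    (ht2 : t ^ 2 = (α + lam - 1) ^ 2 + 4 * lam) :
    1 + 4 * α * (α * Γ ^ 2 * (α + lam + t - 3) + Λ * (α + lam + t + 1)) /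
        ((α + lam + t + 1) *
          ((α + lam) ^ 2 - 2 * (α - lam) + t ^ 2 + 2 * t * (α + lam + 1) + 1))
      - 2 * (2 * α * Γ / (α + lam + t + 1))
      = ridgeErrorProfile lam Γ Λ (t / α, α⁻¹) := by
  rw [ridge_q_denominator_eq ht2, ridgeErrorProfile]
  have hs : 0 < α + lam + t + 1 := by positivity
  have hσ : 1 + t / α + (lam + 1) * α⁻¹ = (α + lam + t + 1) / α := by
    field_simp; ring
  simp only [hσ]
  field_simp
  ring

theorem ridge_estimation_error_not_consistent
    (lam ε β : ℝ) (hlam : 0 < lam)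
    (Γ Λ : ℝ)
    (hΓ : Γ = 1 + ε * (β - 1))
    (t m q Eestim : ℝ → ℝ)
    (ht : ∀ α : ℝ, t α = Real.sqrt ((α + lam - 1) ^ 2 + 4 * lam))
    (hm : ∀ α : ℝ, m α = 2 * α * Γ / (α + lam + t α + 1))
    (hq : ∀ α : ℝ, q α =
      4 * α * (α * Γ ^ 2 * (α + lam + t α - 3) + Λ * (α + lam + t α + 1)) /
        ((α + lam + t α + 1) *
          ((α + lam) ^ 2 - 2 * (α - lam) + (t α) ^ 2 + 2 * t α * (α + lam + 1) + 1)))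
    (hE : ∀ α : ℝ, Eestim α = 1 + q α - 2 * m α) :
    Tendsto Eestim atTop (nhds ((β - 1) ^ 2 * ε ^ 2)) ∧
    (0 < ε → ε < 1 → β ≠ 1 → ¬ Tendsto Eestim atTop (nhds 0)) := by
  have hvars : Tendsto (fun α => (t α / α, α⁻¹)) atTop (𝓝 (1, 0)) := by
    refine Tendsto.prodMk_nhds ?_ tendsto_inv_atTop_zero
    simpa only [ht, add_sub_assoc] using tendsto_sqrt_sq_add_div_atTop (lam - 1) (4 * lam)
  have hlim : Tendsto Eestim atTop (𝓝 ((β - 1) ^ 2 * ε ^ 2)) := by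
    have h := (continuousAt_ridgeErrorProfile lam Γ Λ).tendsto.comp hvars
    rw [ridgeErrorProfile_one_zero, show (Γ - 1) ^ 2 = (β - 1) ^ 2 * ε ^ 2 by rw [hΓ]; ring] at h
    refine h.congr' ?_
    filter_upwards [eventually_gt_atTop 0] with α hα
    have ht_pos : 0 < t α := (ht α).symm ▸ Real.sqrt_pos.mpr (by positivity)
    have ht_sq : t α ^ 2 = (α + lam - 1) ^ 2 + 4 * lam := (ht α).symm ▸ Real.sq_sqrt (by positivity)
    rw [Function.comp_apply, hE, hq, hm, ← ridge_error_eq_profile hα hlam ht_pos ht_sq]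
  refine ⟨hlim, fun hε0 _ hβ1 hzero => ?_⟩
  have hne : (β - 1) ^ 2 * ε ^ 2 ≠ 0 := by
    have : β - 1 ≠ 0 := sub_ne_zero.mpr hβ1
    positivity
  exact hne (tendsto_nhds_unique hlim hzero)
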